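/- There is a constant C > 0 such that for all q, p ∈ ℝ with 0 < q√3 < p (hence 0 < q < p/√3), one has |f(q,p) + 1| ≤ C/(pq). -/

import Mathlib

open MeasureTheory Real

open Filter FourierTransform Topology

noncomputable section

lemma sinc_abs_le (u : ℝ) : |Real.sin u / u| ≤ 1 := by
  rcases eq_or_ne u 0 with h | h
  · simp [h]
  · rw [abs_div, div_le_one (abs_pos.2 h)]
    exact Real.abs_sin_le_abs

lemma intervalIntegrable_sinc (a b : ℝ) :
    IntervalIntegrable (fun u => Real.sin u / u) volume a b := by
  rw [intervalIntegrable_iff]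
  have : IsFiniteMeasure (volume.restrict (Set.uIoc a b)) :=
    ⟨by simpa [Set.uIoc] using measure_Ioc_lt_top⟩
  refine Integrable.mono' (integrable_const 1) ?_ ?_
  · exact (Measurable.div Real.measurable_sin measurable_id).aestronglyMeasurable
  · exact Filter.Eventually.of_forall fun u => sinc_abs_le u

/-- The sine integral `Si(x) = ∫₀ˣ (sin u)/u du`. -/
def Si (x : ℝ) : ℝ := ∫ u in (0:ℝ)..x, Real.sin u / u

/-- The function `f(q,p)`, the Weyl transform of `(A² − 3)/2`. -/
def ftrans (q p : ℝ) : ℝ :=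
  (2 / π) * (Si ((4 / Real.sqrt 3) * q * ((-q + p * Real.sqrt 3) / 2))
    + Si ((4 / Real.sqrt 3) * q * ((-q - p * Real.sqrt 3) / 2))
    + Si ((4 / Real.sqrt 3) * ((-q + p * Real.sqrt 3) / 2) * ((-q - p * Real.sqrt 3) / 2)))

lemma Si_neg (x : ℝ) : Si (-x) = - Si x := by
  have h1 : Si x = ∫ u in (0:ℝ)..x, Real.sin (-u) / (-u) := by
    unfold Si
    congr 1
    ext u
    rw [Real.sin_neg]
    rcases eq_or_ne u 0 with h | h
    · simp [h]
    · field_simp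
  rw [h1, intervalIntegral.integral_comp_neg (fun u => Real.sin u / u)]
  rw [show -(0:ℝ) = 0 by ring] at *
  rw [intervalIntegral.integral_symm]
  simp [Si]

lemma Si_sub_Si_abs_le {x y : ℝ} (hx : 0 < x) (hxy : x ≤ y) : |Si y - Si x| ≤ 2 / x := by
  have hne : ∀ t ∈ Set.uIcc x y, t ≠ 0 := fun t ht => by
    exact (lt_of_lt_of_le hx (Set.uIcc_of_le hxy ▸ ht).1).ne'
  have hpos : ∀ t ∈ Set.uIcc x y, 0 < t := fun t ht =>
    lt_of_lt_of_le hx (Set.uIcc_of_le hxy ▸ ht).1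
  have hsub : Si y - Si x = ∫ t in x..y, Real.sin t / t := by
    unfold Si
    rw [← intervalIntegral.integral_add_adjacent_intervals (intervalIntegrable_sinc 0 x)
      (intervalIntegrable_sinc x y)]
    ring
  have hcont2 : IntervalIntegrable (fun t : ℝ => (t ^ 2)⁻¹) volume x y := by
    apply ContinuousOn.intervalIntegrable
    exact ContinuousOn.inv₀ (by fun_prop) (fun t ht => pow_ne_zero 2 (hne t ht))
  have hcontc : IntervalIntegrable (fun t : ℝ => -(t ^ 2)⁻¹ * -Real.cos t) volume x y := by
    apply ContinuousOn.intervalIntegrable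
    exact ContinuousOn.mul (ContinuousOn.neg (ContinuousOn.inv₀ (by fun_prop)
      (fun t ht => pow_ne_zero 2 (hne t ht)))) (by fun_prop)
  have hparts : (∫ t in x..y, t⁻¹ * Real.sin t)
      = y⁻¹ * (-Real.cos y) - x⁻¹ * (-Real.cos x) - ∫ t in x..y, -(t ^ 2)⁻¹ * -Real.cos t := by
    apply intervalIntegral.integral_mul_deriv_eq_deriv_mul
      (u := fun t => t⁻¹) (u' := fun t => -(t ^ 2)⁻¹) (v := fun t => -Real.cos t)
      (v' := fun t => Real.sin t)
    · exact fun t ht => hasDerivAt_inv (hne t ht)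
    · exact fun t ht => by
        have h := (Real.hasDerivAt_cos t).neg; simp only [neg_neg] at h; exact h
    · exact ContinuousOn.intervalIntegrable (ContinuousOn.neg (ContinuousOn.inv₀ (by fun_prop)
        (fun t ht => pow_ne_zero 2 (hne t ht))))
    · exact Real.continuous_sin.intervalIntegrable x y
  have heq : (∫ t in x..y, Real.sin t / t) = ∫ t in x..y, t⁻¹ * Real.sin t := by
    congr 1; ext t; rw [div_eq_inv_mul]
  have hiv : (∫ t in x..y, (t ^ 2)⁻¹) = x⁻¹ - y⁻¹ := by
    have : ∀ t ∈ Set.uIcc x y, HasDerivAt (fun t : ℝ => -t⁻¹) ((t ^ 2)⁻¹) t := fun t ht => by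
      have h := (hasDerivAt_inv (hne t ht)).neg; simp only [neg_neg] at h; exact h
    rw [intervalIntegral.integral_eq_sub_of_hasDerivAt this hcont2]; ring
  have hbound : |∫ t in x..y, -(t ^ 2)⁻¹ * -Real.cos t| ≤ x⁻¹ - y⁻¹ := by
    rw [← hiv]
    calc |∫ t in x..y, -(t ^ 2)⁻¹ * -Real.cos t|
        ≤ ∫ t in x..y, |(-(t ^ 2)⁻¹ * -Real.cos t)| :=
          intervalIntegral.abs_integral_le_integral_abs hxy
      _ ≤ ∫ t in x..y, (t ^ 2)⁻¹ := by
          apply intervalIntegral.integral_mono_on hxy hcontc.abs hcont2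
          intro t ht
          have ht0 : (0:ℝ) < t := lt_of_lt_of_le hx ht.1
          rw [abs_mul, abs_neg, abs_neg, abs_inv, abs_pow, abs_of_pos ht0]
          calc ((t:ℝ) ^ 2)⁻¹ * |Real.cos t| ≤ (t ^ 2)⁻¹ * 1 := by
                gcongr; exact Real.abs_cos_le_one t
            _ = (t ^ 2)⁻¹ := mul_one _
  rw [hsub, heq, hparts]
  have hy : 0 < y := lt_of_lt_of_le hx hxy
  have h1 : |y⁻¹ * -Real.cos y| ≤ y⁻¹ := by
    rw [abs_mul, abs_neg, abs_inv, abs_of_pos hy]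
    calc y⁻¹ * |Real.cos y| ≤ y⁻¹ * 1 := by gcongr; exact Real.abs_cos_le_one y
      _ = y⁻¹ := mul_one _
  have h2 : |x⁻¹ * -Real.cos x| ≤ x⁻¹ := by
    rw [abs_mul, abs_neg, abs_inv, abs_of_pos hx]
    calc x⁻¹ * |Real.cos x| ≤ x⁻¹ * 1 := by gcongr; exact Real.abs_cos_le_one x
      _ = x⁻¹ := mul_one _
  have hy0 : (0:ℝ) ≤ y⁻¹ := by positivity
  calc |y⁻¹ * -Real.cos y - x⁻¹ * -Real.cos x - ∫ t in x..y, -(t ^ 2)⁻¹ * -Real.cos t|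
      ≤ |y⁻¹ * -Real.cos y| + |x⁻¹ * -Real.cos x| + |∫ t in x..y, -(t ^ 2)⁻¹ * -Real.cos t| := by
        have := abs_sub (y⁻¹ * -Real.cos y - x⁻¹ * -Real.cos x)
          (∫ t in x..y, -(t ^ 2)⁻¹ * -Real.cos t)
        calc _ ≤ |y⁻¹ * -Real.cos y - x⁻¹ * -Real.cos x|
              + |∫ t in x..y, -(t ^ 2)⁻¹ * -Real.cos t| := abs_sub _ _
          _ ≤ _ := by gcongr; exact abs_sub _ _
    _ ≤ y⁻¹ + x⁻¹ + (x⁻¹ - y⁻¹) := by gcongr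
    _ = 2 / x := by field_simp; ring

def DK (n : ℕ) (t : ℝ) : ℝ := 1 + 2 * ∑ k ∈ Finset.range n, Real.cos (2*(k+1)*t)

lemma DK_continuous (n : ℕ) : Continuous (DK n) := by
  unfold DK; fun_prop

lemma sin_eq_sin_mul_DK (n : ℕ) (t : ℝ) :
    Real.sin ((2*n+1)*t) = Real.sin t * DK n t := by
  induction n with
  | zero => simp [DK]
  | succ n ih =>
    have key : Real.sin ((2*(n+1)+1)*t) - Real.sin ((2*n+1)*t)
        = 2 * Real.sin t * Real.cos ((2*(n+1))*t) := by
      rw [Real.sin_sub_sin]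
      push_cast
      ring_nf
    have : Real.sin ((2*(n+1)+1)*t) = Real.sin ((2*n+1)*t)
        + 2 * Real.sin t * Real.cos ((2*(n+1))*t) := by linarith
    push_cast
    rw [this, ih]
    unfold DK
    rw [Finset.sum_range_succ]
    push_cast
    ring
lemma integral_DK (n : ℕ) : ∫ t in (0:ℝ)..(π/2), DK n t = π / 2 := by
  unfold DK
  have hint : ∀ k ∈ Finset.range n, IntervalIntegrable
      (fun t => Real.cos (2*((k:ℝ)+1)*t)) volume 0 (π/2) := fun k _ => by
    apply Continuous.intervalIntegrable; fun_prop
  rw [intervalIntegral.integral_add (by apply Continuous.intervalIntegrable; fun_prop)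
    (by apply Continuous.intervalIntegrable; fun_prop),
    intervalIntegral.integral_const_mul, intervalIntegral.integral_finset_sum hint]
  have hz : ∀ k ∈ Finset.range n, (∫ t in (0:ℝ)..(π/2), Real.cos (2*((k:ℝ)+1)*t)) = 0 := by
    intro k _
    have hc : (2*((k:ℝ)+1)) ≠ 0 := by positivity
    rw [intervalIntegral.integral_comp_mul_left (fun u => Real.cos u) hc]
    rw [integral_cos]
    have : 2*((k:ℝ)+1) * (π/2) = (k+1 : ℕ) * π := by push_cast; ring
    rw [mul_zero, this, Real.sin_nat_mul_pi, Real.sin_zero, sub_zero, smul_zero]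
  rw [Finset.sum_congr rfl hz]
  simp

lemma g_abs_le {t : ℝ} (ht : t ∈ Set.Ioc (0:ℝ) (π/2)) : |1/t - 1/Real.sin t| ≤ 3 := by
  obtain ⟨ht0, ht2⟩ := ht
  have hsin : 0 < Real.sin t :=
    Real.sin_pos_of_pos_of_lt_pi ht0 (lt_of_le_of_lt ht2 (by linarith [Real.pi_pos]))
  rcases le_or_gt t 1 with h1 | h1
  · have hcube : t - t^3/4 < Real.sin t := by
      have := Real.sin_gt_sub_cube ht0; nlinarith [pow_pos ht0 3]
    have ht3 : t^3 ≤ t := by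
      calc t^3 ≤ t^1 := pow_le_pow_of_le_one ht0.le h1 (by norm_num)
        _ = t := pow_one t
    have hsin34 : 3*t/4 ≤ Real.sin t := by nlinarith
    have hle : Real.sin t ≤ t := Real.sin_le ht0.le
    have heq : 1/t - 1/Real.sin t = -((t - Real.sin t)/(t * Real.sin t)) := by
      field_simp; ring
    rw [heq, abs_neg, abs_of_nonneg (div_nonneg (by linarith) (by positivity))]
    have : (t - Real.sin t)/(t * Real.sin t) ≤ (t^3/4)/(3*t^2/4) := by
      apply div_le_div₀ (by positivity) (by nlinarith) (by positivity) (by nlinarith)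
    calc (t - Real.sin t)/(t * Real.sin t) ≤ (t^3/4)/(3*t^2/4) := this
      _ = t/3 := by field_simp
      _ ≤ 3 := by linarith
  · have hsin2 : 1/2 ≤ Real.sin t := by
      have hms := Real.mul_le_sin ht0.le ht2
      have hpi : π ≤ 4 := Real.pi_le_four
      have h2 : 1/2 ≤ 2/π := by
        rw [div_le_div_iff₀ (by norm_num) Real.pi_pos]; linarith
      nlinarith [Real.pi_pos, div_nonneg (by norm_num : (0:ℝ) ≤ 2) Real.pi_pos.le]
    have h1t : 1/t ≤ 1 := by rw [div_le_one ht0]; linarith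
    have h1s : 1/Real.sin t ≤ 2 := by
      rw [div_le_iff₀ hsin]; linarith
    have := abs_sub (1/t) (1/Real.sin t)
    calc |1/t - 1/Real.sin t| ≤ |1/t| + |1/Real.sin t| := abs_sub _ _
      _ = 1/t + 1/Real.sin t := by
          rw [abs_of_pos (by positivity), abs_of_pos (by positivity)]
      _ ≤ 3 := by linarith

def Find : ℝ → ℂ :=
  Set.indicator (Set.Ioc (0:ℝ) (π/2)) (fun t => ((1/t - 1/Real.sin t : ℝ) : ℂ))

lemma Find_integrable : Integrable Find := by
  rw [Find]
  apply (IntegrableOn.integrable_indicator · measurableSet_Ioc)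
  apply Integrable.mono' (integrable_const (3:ℝ))
  · apply Measurable.aestronglyMeasurable
    exact Complex.measurable_ofReal.comp
      ((measurable_const.div measurable_id).sub (measurable_const.div Real.measurable_sin))
  · rw [ae_restrict_iff' measurableSet_Ioc]
    refine Eventually.of_forall fun t ht => ?_
    rw [Complex.norm_real, Real.norm_eq_abs]
    exact g_abs_le ht

lemma tendsto_osc :
    Tendsto (fun n : ℕ => ∫ t in (0:ℝ)..(π/2),
      Real.sin ((2*n+1)*t) * (1/t - 1/Real.sin t)) atTop (𝓝 0) := by
  have hw : Tendsto (fun n : ℕ => ((2*n+1:ℝ))/(2*π)) atTop (cocompact ℝ) := by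
    rw [cocompact_eq_atBot_atTop]
    apply Tendsto.mono_right _ le_sup_right
    apply Tendsto.atTop_div_const (by positivity)
    apply tendsto_atTop_add_const_right
    exact (tendsto_natCast_atTop_atTop).const_mul_atTop (by norm_num)
  have hRL : Tendsto (fun n : ℕ => 𝓕 Find (((2*n+1:ℝ))/(2*π))) atTop (𝓝 0) :=
    (Real.zero_at_infty_fourier Find).comp hw
  have him : Tendsto (fun n : ℕ => (𝓕 Find (((2*n+1:ℝ))/(2*π))).im) atTop (𝓝 0) := by
    have := (Complex.continuous_im.tendsto 0).comp hRL
    exact this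
  have key : ∀ n : ℕ, (𝓕 Find (((2*n+1:ℝ))/(2*π))).im
      = -∫ t in (0:ℝ)..(π/2), Real.sin ((2*n+1)*t) * (1/t - 1/Real.sin t) := by
    intro n
    set w : ℝ := ((2*n+1:ℝ))/(2*π) with hwdef
    have hInt : Integrable (fun v : ℝ => Complex.exp (↑(-2*π*v*w) * Complex.I) * Find v) := by
      apply Find_integrable.bdd_mul
      · apply Continuous.aestronglyMeasurable
        exact Complex.continuous_exp.comp ((Complex.continuous_ofReal.comp (by fun_prop)).mul
          continuous_const)
      · exact Eventually.of_forall fun v => (Complex.norm_exp_ofReal_mul_I _).le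
    rw [Real.fourier_real_eq_integral_exp_smul]
    have hsmul : (∫ v : ℝ, Complex.exp (↑(-2*π*v*w) * Complex.I) • Find v)
        = ∫ v : ℝ, Complex.exp (↑(-2*π*v*w) * Complex.I) * Find v := by
      simp [smul_eq_mul]
    have him_eq : (∫ v : ℝ, Complex.exp (↑(-2*π*v*w) * Complex.I) * Find v).im
        = ∫ v : ℝ, (Complex.exp (↑(-2*π*v*w) * Complex.I) * Find v).im := by
      have := (ContinuousLinearMap.integral_comp_comm Complex.imCLM hInt).symm
      simpa using this
    rw [hsmul, him_eq]
    have hpt : ∀ v : ℝ, (Complex.exp (↑(-2*π*v*w) * Complex.I) * Find v).im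
        = -(Real.sin ((2*n+1)*v) *
            Set.indicator (Set.Ioc (0:ℝ) (π/2)) (fun t => 1/t - 1/Real.sin t) v) := by
      intro v
      have harg : -2*π*v*w = -((2*n+1)*v) := by
        rw [hwdef]; field_simp
      have hre : (Find v).re
          = Set.indicator (Set.Ioc (0:ℝ) (π/2)) (fun t => 1/t - 1/Real.sin t) v := by
        unfold Find
        by_cases h : v ∈ Set.Ioc (0:ℝ) (π/2)
        · simp only [Set.indicator_of_mem h, Complex.ofReal_re]
        · simp only [Set.indicator_of_notMem h, Complex.zero_re]
      have him0 : (Find v).im = 0 := by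
        unfold Find
        by_cases h : v ∈ Set.Ioc (0:ℝ) (π/2)
        · simp only [Set.indicator_of_mem h, Complex.ofReal_im]
        · simp only [Set.indicator_of_notMem h, Complex.zero_im]
      rw [Complex.mul_im, him0, mul_zero, zero_add, Complex.exp_ofReal_mul_I_im, harg,
        Real.sin_neg, hre]
      ring
    rw [MeasureTheory.integral_congr_ae (Eventually.of_forall hpt)]
    rw [MeasureTheory.integral_neg]
    congr 1
    have hind : ∀ v : ℝ, Real.sin ((2*n+1)*v) *
        Set.indicator (Set.Ioc (0:ℝ) (π/2)) (fun t => 1/t - 1/Real.sin t) v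
        = Set.indicator (Set.Ioc (0:ℝ) (π/2))
            (fun t => Real.sin ((2*n+1)*t) * (1/t - 1/Real.sin t)) v := by
      intro v
      by_cases h : v ∈ Set.Ioc (0:ℝ) (π/2) <;> simp [h]
    rw [MeasureTheory.integral_congr_ae (Eventually.of_forall hind),
      MeasureTheory.integral_indicator measurableSet_Ioc,
      intervalIntegral.integral_of_le (by positivity : (0:ℝ) ≤ π/2)]
  have : Tendsto (fun n : ℕ => -∫ t in (0:ℝ)..(π/2),
      Real.sin ((2*n+1)*t) * (1/t - 1/Real.sin t)) atTop (𝓝 0) := by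
    have hfe : (fun n : ℕ => -∫ t in (0:ℝ)..(π/2),
      Real.sin ((2*n+1)*t) * (1/t - 1/Real.sin t)) = fun n : ℕ => (𝓕 Find (((2*n+1:ℝ))/(2*π))).im
      := funext fun n => (key n).symm
    rw [hfe]

    exact him
  simpa using this.neg

lemma osc_integrable (n : ℕ) : IntervalIntegrable
    (fun t => Real.sin ((2*n+1)*t) * (1/t - 1/Real.sin t)) volume 0 (π/2) := by
  rw [intervalIntegrable_iff]
  have : IsFiniteMeasure (volume.restrict (Set.uIoc (0:ℝ) (π/2))) :=
    ⟨by simp [Set.uIoc]⟩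
  refine Integrable.mono' (integrable_const 3) ?_ ?_
  · apply Measurable.aestronglyMeasurable
    exact (Real.measurable_sin.comp (measurable_const.mul measurable_id)).mul
      ((measurable_const.div measurable_id).sub (measurable_const.div Real.measurable_sin))
  · rw [ae_restrict_iff' measurableSet_uIoc]
    refine Eventually.of_forall fun t ht => ?_
    rw [Set.uIoc_of_le (by positivity : (0:ℝ) ≤ π/2)] at ht
    rw [norm_mul, Real.norm_eq_abs, Real.norm_eq_abs]
    calc |Real.sin ((2*n+1)*t)| * |1/t - 1/Real.sin t| ≤ 1 * 3 :=
      mul_le_mul (Real.abs_sin_le_one _) (g_abs_le ht) (abs_nonneg _) zero_le_one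
    _ = 3 := one_mul 3

lemma Si_odd_eq (n : ℕ) : Si ((2*n+1) * (π/2))
    = π/2 + ∫ t in (0:ℝ)..(π/2), Real.sin ((2*n+1)*t) * (1/t - 1/Real.sin t) := by
  set c : ℝ := (2*n+1 : ℝ) with hc
  have hc0 : (0:ℝ) < c := by rw [hc]; positivity
  have h1 : (∫ t in (0:ℝ)..(π/2), Real.sin (c*t)/(c*t))
      = c⁻¹ • ∫ u in (0:ℝ)..(c*(π/2)), Real.sin u / u := by
    have := intervalIntegral.integral_comp_mul_left (a := 0) (b := π/2)
      (fun u => Real.sin u / u) hc0.ne'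
    simpa using this
  have h2 : (∫ t in (0:ℝ)..(π/2), Real.sin (c*t)/t)
      = c * ∫ t in (0:ℝ)..(π/2), Real.sin (c*t)/(c*t) := by
    rw [← intervalIntegral.integral_const_mul]
    congr 1
    ext t
    rcases eq_or_ne t 0 with h | h
    · simp [h]
    · field_simp
  have hsub : Si (c * (π/2)) = ∫ t in (0:ℝ)..(π/2), Real.sin (c*t)/t := by
    rw [h2, h1, smul_eq_mul, ← mul_assoc, mul_inv_cancel₀ hc0.ne', one_mul]
    rfl
  have hsplit : (∫ t in (0:ℝ)..(π/2), Real.sin (c*t)/t)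
      = (∫ t in (0:ℝ)..(π/2), DK n t)
        + ∫ t in (0:ℝ)..(π/2), Real.sin ((2*n+1)*t) * (1/t - 1/Real.sin t) := by
    rw [← intervalIntegral.integral_add ((DK_continuous n).intervalIntegrable _ _)
      (osc_integrable n)]
    apply intervalIntegral.integral_congr_ae
    refine Eventually.of_forall fun t ht => ?_
    rw [Set.uIoc_of_le (by positivity : (0:ℝ) ≤ π/2)] at ht
    have ht0 : 0 < t := ht.1
    have hsin : 0 < Real.sin t :=
      Real.sin_pos_of_pos_of_lt_pi ht0 (lt_of_le_of_lt ht.2 (by linarith [Real.pi_pos]))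
    have hkey : Real.sin (c*t) = Real.sin t * DK n t := by
      rw [hc]; exact_mod_cast sin_eq_sin_mul_DK n t
    have hcast : Real.sin ((2*(n:ℝ)+1)*t) = Real.sin (c*t) := by rw [hc]
    rw [hcast, hkey]
    field_simp
    ring
  rw [hsub, hsplit, integral_DK]

lemma tendsto_Si_odd : Tendsto (fun n : ℕ => Si ((2*n+1) * (π/2))) atTop (𝓝 (π/2)) := by
  have hfe : (fun n : ℕ => Si ((2*n+1) * (π/2)))
      = fun n : ℕ => π/2 + ∫ t in (0:ℝ)..(π/2),
          Real.sin ((2*n+1)*t) * (1/t - 1/Real.sin t) := funext Si_odd_eq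
  rw [hfe]
  simpa using (tendsto_const_nhds (x := π/2)).add tendsto_osc

lemma Si_tail {x : ℝ} (hx : 0 < x) : |Si x - π/2| ≤ 2/x := by
  have hy : Tendsto (fun n : ℕ => ((2*n+1:ℝ)) * (π/2)) atTop atTop := by
    apply Tendsto.atTop_mul_const (by positivity)
    apply tendsto_atTop_add_const_right
    exact (tendsto_natCast_atTop_atTop).const_mul_atTop (by norm_num)
  have hev : ∀ᶠ n : ℕ in atTop, |Si ((2*n+1) * (π/2)) - Si x| ≤ 2/x := by
    filter_upwards [hy.eventually_ge_atTop x] with n hn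
    exact Si_sub_Si_abs_le hx hn
  have hlim : Tendsto (fun n : ℕ => |Si ((2*n+1) * (π/2)) - Si x|) atTop
      (𝓝 |π/2 - Si x|) := by
    exact ((tendsto_Si_odd.sub tendsto_const_nhds).abs)
  have := le_of_tendsto hlim hev
  rwa [abs_sub_comm] at this

lemma Si_tail_neg {x : ℝ} (hx : x < 0) : |Si x + π/2| ≤ 2/(-x) := by
  have h : Si x = - Si (-x) := by rw [← Si_neg, neg_neg]
  rw [h]
  calc |-Si (-x) + π/2| = |Si (-x) - π/2| := by rw [← abs_neg]; ring_nf
    _ ≤ 2/(-x) := Si_tail (by linarith)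

set_option maxHeartbeats 1000000 in
/-- There is a constant `C > 0` such that for all `q, p` with
`0 < q√3 < p`, `|f(q,p) + 1| ≤ C/(pq)`. -/
theorem ftrans_add_one_le_div :
    ∃ C : ℝ, 0 < C ∧ ∀ q p : ℝ,
      0 < q * Real.sqrt 3 → q * Real.sqrt 3 < p → |ftrans q p + 1| ≤ C / (p * q) := by
  refine ⟨3, by norm_num, fun q p hq3 hqp => ?_⟩
  obtain ⟨s, hs⟩ : ∃ s : ℝ, s = Real.sqrt 3 := ⟨_, rfl⟩
  rw [← hs] at hq3 hqp
  have hs0 : 0 < s := hs ▸ Real.sqrt_pos.2 (by norm_num)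
  have hs2 : s^2 = 3 := hs ▸ Real.sq_sqrt (by norm_num)
  have hq : 0 < q := by nlinarith
  have hp : 0 < p := lt_trans hq3 hqp
  have hpq : 0 < p * q := mul_pos hp hq
  obtain ⟨A1, hA1⟩ : ∃ a : ℝ, a = (4 / s) * q * ((-q + p * s) / 2) := ⟨_, rfl⟩
  obtain ⟨A2, hA2⟩ : ∃ a : ℝ, a = (4 / s) * q * ((-q - p * s) / 2) := ⟨_, rfl⟩
  obtain ⟨A3, hA3⟩ : ∃ a : ℝ, a = (4 / s) * ((-q + p * s) / 2) * ((-q - p * s) / 2) := ⟨_, rfl⟩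
  have hA1v : A1 = 2 * q * (p * s - q) / s := by rw [hA1]; field_simp; ring
  have hA2v : -A2 = 2 * q * (q + p * s) / s := by rw [hA2]; field_simp; ring
  have hA3v : -A3 = (3 * p^2 - q^2) / s := by
    rw [hA3]; field_simp; nlinarith [hs2, sq_nonneg s, sq_nonneg p, mul_self_nonneg (p*s)]
  have ha1 : (4/3) * (p*q) ≤ A1 := by
    rw [hA1v, le_div_iff₀ hs0]
    nlinarith [mul_le_mul_of_nonneg_left hqp.le (mul_pos hq hs0).le]
  have ha2 : 2 * (p*q) ≤ -A2 := by
    rw [hA2v, le_div_iff₀ hs0]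
    nlinarith
  have ha3 : (8/3) * (p*q) ≤ -A3 := by
    rw [hA3v, le_div_iff₀ hs0]
    nlinarith [sq_nonneg (p - q*s), sq_nonneg q, mul_le_mul_of_nonneg_left hqp.le hp.le]
  have hA1pos : 0 < A1 := lt_of_lt_of_le (by positivity) ha1
  have hA2neg : A2 < 0 := by nlinarith
  have hA3neg : A3 < 0 := by nlinarith
  have b1 : |Si A1 - π/2| ≤ (3/2) / (p*q) := by
    calc |Si A1 - π/2| ≤ 2 / A1 := Si_tail hA1pos
      _ ≤ 2 / ((4/3) * (p*q)) := by
          apply div_le_div_of_nonneg_left (by norm_num) (by positivity) ha1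
      _ = (3/2) / (p*q) := by field_simp; ring
  have b2 : |Si A2 + π/2| ≤ 1 / (p*q) := by
    calc |Si A2 + π/2| ≤ 2 / (-A2) := Si_tail_neg hA2neg
      _ ≤ 2 / (2 * (p*q)) := by
          apply div_le_div_of_nonneg_left (by norm_num) (by positivity) ha2
      _ = 1 / (p*q) := by field_simp
  have b3 : |Si A3 + π/2| ≤ (3/4) / (p*q) := by
    calc |Si A3 + π/2| ≤ 2 / (-A3) := Si_tail_neg hA3neg
      _ ≤ 2 / ((8/3) * (p*q)) := by
          apply div_le_div_of_nonneg_left (by norm_num) (by positivity) ha3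
      _ = (3/4) / (p*q) := by field_simp; ring
  have hpi : 0 < π := Real.pi_pos
  have hft : ftrans q p + 1
      = (2/π) * ((Si A1 - π/2) + (Si A2 + π/2) + (Si A3 + π/2)) := by
    unfold ftrans
    rw [← hs, ← hA1, ← hA2, ← hA3]
    field_simp
    ring
  have habs : |(Si A1 - π/2) + (Si A2 + π/2) + (Si A3 + π/2)|
      ≤ (3/2) / (p*q) + 1 / (p*q) + (3/4) / (p*q) := by
    calc |(Si A1 - π/2) + (Si A2 + π/2) + (Si A3 + π/2)|
        ≤ |(Si A1 - π/2) + (Si A2 + π/2)| + |Si A3 + π/2| := abs_add_le _ _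
      _ ≤ |Si A1 - π/2| + |Si A2 + π/2| + |Si A3 + π/2| := by
          gcongr; exact abs_add_le _ _
      _ ≤ (3/2) / (p*q) + 1 / (p*q) + (3/4) / (p*q) :=
          add_le_add (add_le_add b1 b2) b3
  have hpi3 : (3:ℝ) ≤ π := by linarith [Real.pi_gt_three]
  calc |ftrans q p + 1|
      = (2/π) * |(Si A1 - π/2) + (Si A2 + π/2) + (Si A3 + π/2)| := by
        rw [hft, abs_mul, abs_of_pos (by positivity)]
    _ ≤ (2/π) * ((3/2) / (p*q) + 1 / (p*q) + (3/4) / (p*q)) := by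
        apply mul_le_mul_of_nonneg_left habs (by positivity)
    _ ≤ (2/3) * ((3/2) / (p*q) + 1 / (p*q) + (3/4) / (p*q)) := by
        apply mul_le_mul_of_nonneg_right
          (div_le_div_of_nonneg_left (by norm_num) (by norm_num) hpi3) (by positivity)
    _ = (13/6) / (p*q) := by field_simp; ring
    _ ≤ 3 / (p*q) :=
        div_le_div_of_nonneg_right (by norm_num) hpq.le
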